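/- arXiv:1803.00237 — 7 statements merged into one kernel-verified Lean document; each statement's English description precedes it below -/
import Mathlib

section
/- Let f_1, ..., f_n be analytic and zero-free functions on right half-planes Π_{a_i}^+ = {ζ ∈ ℂ : Re ζ > a_i}. If there exists an analytic function f such that f(ζ_1 + ... + ζ_n) = ∏_{i=1}^n f_i(ζ_i) for all ζ_i ∈ Π_{a_i}^+, then there exist complex constants λ and c_1, ..., c_n such that f_i(ζ_i) = c_i e^{λ ζ_i} for each i. -/
/-!
Freezing every variable but `ζ i`, the functional equation says that near `ζ i` the factor `F i`
is a nonzero multiple of a translate of `f`, so `F i'/F i` at `ζ i` equals `f'/f` at `∑ j, ζ j`.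
As there is a second index `j`, moving `ζ i` with `ζ j` fixed shows that this logarithmic
derivative is one constant `λ` for all factors; a zero-free function with logarithmic derivative
`λ` on a connected open set is a constant multiple of `exp (λ ζ)`.
-/

open Complex Filter Topology Finset Function

section LogDeriv

variable {𝕜 𝕜' : Type*} [NontriviallyNormedField 𝕜] [NontriviallyNormedField 𝕜']
  [NormedAlgebra 𝕜 𝕜']

theorem logDeriv_eq_of_eventuallyEq_mul_const {f g : 𝕜 → 𝕜'} {x c : 𝕜} {C : 𝕜'}
    (hC : C ≠ 0) (h : (fun s => f (s + c)) =ᶠ[𝓝 x] fun s => g s * C) :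
    logDeriv g x = logDeriv f (x + c) := by
  rw [← logDeriv_mul_const x C hC, ← (logDeriv_congr_nhds h).eq_of_nhds, logDeriv_apply,
    logDeriv_apply, deriv_comp_add_const]

variable {ι : Type*} [Fintype ι] [DecidableEq ι] {U : ι → Set 𝕜} {f : 𝕜 → 𝕜'}
  {F : ι → 𝕜 → 𝕜'}

theorem logDeriv_factor_eq_of_sum_eq_prod (hU : ∀ i, IsOpen (U i))
    (hF : ∀ i, ∀ z ∈ U i, F i z ≠ 0)
    (heq : ∀ ζ : ι → 𝕜, (∀ i, ζ i ∈ U i) → f (∑ i, ζ i) = ∏ i, F i (ζ i))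
    {ζ : ι → 𝕜} (hζ : ∀ i, ζ i ∈ U i) (i : ι) :
    logDeriv (F i) (ζ i) = logDeriv f (∑ j, ζ j) := by
  rw [sum_eq_add_sum_sdiff_singleton_of_mem (mem_univ i)]
  refine logDeriv_eq_of_eventuallyEq_mul_const (C := ∏ j ∈ univ \ {i}, F j (ζ j))
    (prod_ne_zero_iff.2 fun j _ => hF j _ (hζ j)) ?_
  filter_upwards [(hU i).mem_nhds (hζ i)] with s hs
  simpa only [apply_update F, sum_update_of_mem (mem_univ i), prod_update_of_mem (mem_univ i)]
    using heq _ ((forall_update_iff ζ fun j w => w ∈ U j).2 ⟨hs, fun j _ => hζ j⟩)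

theorem exists_logDeriv_factor_eq_const [Nontrivial ι] (hU : ∀ i, IsOpen (U i))
    (hUne : ∀ i, (U i).Nonempty) (hF : ∀ i, ∀ z ∈ U i, F i z ≠ 0)
    (heq : ∀ ζ : ι → 𝕜, (∀ i, ζ i ∈ U i) → f (∑ i, ζ i) = ∏ i, F i (ζ i)) :
    ∃ lam, ∀ i, ∀ z ∈ U i, logDeriv (F i) z = lam := by
  choose β hβ using hUne
  refine ⟨logDeriv f (∑ j, β j), fun i z hz => ?_⟩
  obtain ⟨j, hji⟩ := exists_ne i
  have hζ := (forall_update_iff β fun k w => w ∈ U k).2 ⟨hz, fun k _ => hβ k⟩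
  calc logDeriv (F i) z = logDeriv f (∑ k, update β i z k) := by
        simpa using logDeriv_factor_eq_of_sum_eq_prod hU hF heq hζ i
    _ = logDeriv (F j) (β j) := by
        simpa [update_of_ne hji] using (logDeriv_factor_eq_of_sum_eq_prod hU hF heq hζ j).symm
    _ = logDeriv f (∑ k, β k) := logDeriv_factor_eq_of_sum_eq_prod hU hF heq hβ j

end LogDeriv

theorem exists_eq_const_mul_exp_of_logDeriv_eq {g : ℂ → ℂ} {U : Set ℂ} {lam : ℂ}
    (hU : IsOpen U) (hUc : IsPreconnected U) (hg : DifferentiableOn ℂ g U)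
    (hg0 : ∀ z ∈ U, g z ≠ 0) (hlog : ∀ z ∈ U, logDeriv g z = lam) :
    ∃ c, ∀ z ∈ U, g z = c * exp (lam * z) := by
  have hexp : ∀ z, logDeriv (fun w => exp (lam * w)) z = lam := fun z => by
    rw [show (fun w => exp (lam * w)) = exp ∘ (lam * ·) from rfl,
      logDeriv_comp (by fun_prop) (by fun_prop), logDeriv_exp]
    simp
  obtain ⟨c, -, hc⟩ := (logDeriv_eqOn_iff (g := fun w => exp (lam * w)) hg (by fun_prop) hU hUc
    (fun _ _ => exp_ne_zero _) hg0).1 fun z hz => by rw [hlog z hz, hexp]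
  exact ⟨c, fun z hz => by simpa using hc hz⟩

theorem stmt_0_general (n : ℕ) (hn : 2 ≤ n) (a : Fin n → ℝ) (f : ℂ → ℂ) (F : Fin n → ℂ → ℂ)
    (hF : ∀ i, DifferentiableOn ℂ (F i) {ζ : ℂ | a i < ζ.re})
    (hFz : ∀ i, ∀ ζ : ℂ, a i < ζ.re → F i ζ ≠ 0)
    (heq : ∀ ζ : Fin n → ℂ, (∀ i, a i < (ζ i).re) →
      f (∑ i, ζ i) = ∏ i, F i (ζ i)) :
    ∃ (lam : ℂ) (c : Fin n → ℂ), ∀ i, ∀ ζ : ℂ, a i < ζ.re →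
      F i ζ = c i * Complex.exp (lam * ζ) := by
  have : Nontrivial (Fin n) := Fin.nontrivial_iff_two_le.2 hn
  have hopen : ∀ i, IsOpen {ζ : ℂ | a i < ζ.re} :=
    fun i => isOpen_lt continuous_const continuous_re
  obtain ⟨lam, hlam⟩ := exists_logDeriv_factor_eq_const (U := fun i => {ζ : ℂ | a i < ζ.re})
    hopen (fun i => ⟨a i + 1, by simp⟩) hFz heq
  choose c hc using fun i => exists_eq_const_mul_exp_of_logDeriv_eq (hopen i)
    (convex_halfSpace_re_gt (a i)).isPreconnected (hF i) (hFz i) (hlam i)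
  exact ⟨lam, c, hc⟩

theorem stmt_0 (n : ℕ) (hn : 2 ≤ n) (a : Fin n → ℝ) (f : ℂ → ℂ) (F : Fin n → ℂ → ℂ)
    (hF : ∀ i, DifferentiableOn ℂ (F i) {ζ : ℂ | a i < ζ.re})
    (hFz : ∀ i, ∀ ζ : ℂ, a i < ζ.re → F i ζ ≠ 0)
    (hf : DifferentiableOn ℂ f {w : ℂ | (∑ i, a i) < w.re})
    (heq : ∀ ζ : Fin n → ℂ, (∀ i, a i < (ζ i).re) →
      f (∑ i, ζ i) = ∏ i, F i (ζ i)) :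
    ∃ (lam : ℂ) (c : Fin n → ℂ), ∀ i, ∀ ζ : ℂ, a i < ζ.re →
      F i ζ = c i * Complex.exp (lam * ζ) :=
  stmt_0_general n hn a f F hF hFz heq
end

section
/- Let p, q, s, t ∈ ℕ (representing one coordinate of the multi-indices, divided by m_i, here taken as rationals p', q', s', t' ≥ 0). If (η + p')(η + s' - t')(η + p' - q' + s') = (η + s')(η + p' - q')(η + s' - t' + p') holds for all η in some right half-plane, then the tuple (p', q', s', t') satisfies Condition (I): at least one of the following holds: (i) p' = s' = 0; (ii) q' = t' = 0; (iii) p' = q' = 0; (iv) s' = t' = 0; (v) p' = s' and q' = t'; (vi) p' = q' and s' = t'. -/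
/-- Condition (I) for a tuple of nonnegative reals. -/
def ConditionI (x₁ x₂ y₁ y₂ : ℝ) : Prop :=
  (x₁ = 0 ∧ x₂ = 0) ∨ (y₁ = 0 ∧ y₂ = 0) ∨ (x₁ = 0 ∧ y₁ = 0) ∨
  (x₂ = 0 ∧ y₂ = 0) ∨ (x₁ = x₂ ∧ y₁ = y₂) ∨ (x₁ = y₁ ∧ x₂ = y₂)

theorem stmt_4 (p q s t : ℝ) (hp : 0 ≤ p) (hq : 0 ≤ q) (hs : 0 ≤ s) (ht : 0 ≤ t)
    (h : ∃ a : ℝ, ∀ η : ℂ, a < η.re →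
      (η + p) * (η + s - t) * (η + p - q + s) =
        (η + s) * (η + p - q) * (η + s - t + p)) :
    ConditionI p s q t := by
  obtain ⟨a, h⟩ := h
  have h1 := h ((a : ℂ) + 1) (by simp)
  have h2 := h ((a : ℂ) + 2) (by simp)
  -- linear coefficient of the difference polynomial
  have hAc : ((s : ℂ) * q - p * t) = 0 := by
    push_cast at h1 h2
    linear_combination h2 - h1
  have hA : s * q - p * t = 0 := by exact_mod_cast hAc
  -- constant coefficient
  have hCc : ((p : ℂ) * q * t + q * s ^ 2 - p ^ 2 * t - q * s * t) = 0 := by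
    push_cast at h1
    linear_combination h1 - ((a : ℂ) + 1) * hAc
  have hC : p * q * t + q * s ^ 2 - p ^ 2 * t - q * s * t = 0 := by exact_mod_cast hCc
  have key2 : q * s * (q + s - p - t) = 0 := by linear_combination hC + (q - p) * hA
  by_cases hq0 : q = 0
  · have hpt : p * t = 0 := by linear_combination s * hq0 - hA
    rcases mul_eq_zero.mp hpt with hp0 | ht0
    · exact Or.inr (Or.inr (Or.inl ⟨hp0, hq0⟩))
    · exact Or.inr (Or.inl ⟨hq0, ht0⟩)
  by_cases hs0 : s = 0
  · have hpt : p * t = 0 := by linear_combination q * hs0 - hA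
    rcases mul_eq_zero.mp hpt with hp0 | ht0
    · exact Or.inl ⟨hp0, hs0⟩
    · exact Or.inr (Or.inr (Or.inr (Or.inl ⟨hs0, ht0⟩)))
  -- q, s ≠ 0 : q + s = p + t and qs = pt
  have hqs : q * s ≠ 0 := mul_ne_zero hq0 hs0
  have hsum : q + s - p - t = 0 := by
    rcases mul_eq_zero.mp key2 with h' | h'
    · exact absurd h' hqs
    · exact h'
  have hfac : (p - q) * (p - s) = 0 := by linear_combination -p * hsum + hA
  rcases mul_eq_zero.mp hfac with h' | h'
  · -- p = q, t = s
    have hpq : p = q := by linarith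
    have hts : s = t := by linarith
    exact Or.inr (Or.inr (Or.inr (Or.inr (Or.inr ⟨hpq, hts⟩))))
  · -- p = s, q = t
    have hps : p = s := by linarith
    have hqt : q = t := by linarith
    exact Or.inr (Or.inr (Or.inr (Or.inr (Or.inl ⟨hps, hqt⟩))))
end

section
/- Let P, S, T ≥ 0 be real numbers and a, b ∈ ℝ. Suppose (η + a + b) / ((η + b)(η + a + S - T)) = Γ(η + S) Γ(η + S - T + P) / (Γ(η + S - T + 1) Γ(η + P + S)) for all η in some right half-plane. Then T = 0 or P = 0. -/
open Complex

set_option maxRecDepth 8000 in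
set_option maxHeartbeats 1600000 in
theorem stmt_6 (P S T a b : ℝ) (hP : 0 ≤ P) (hS : 0 ≤ S) (hT : 0 ≤ T)
    (h : ∃ c : ℝ, ∀ η : ℂ, c < η.re →
      (η + a + b) / ((η + b) * (η + a + S - T)) =
        Complex.Gamma (η + S) * Complex.Gamma (η + S - T + P) /
          (Complex.Gamma (η + S - T + 1) * Complex.Gamma (η + P + S))) :
    T = 0 ∨ P = 0 := by
  obtain ⟨c, h⟩ := h
  set M : ℝ := max c (|a| + |b| + S + T + P + 1) with hM
  have main : ∀ x : ℝ, M < x →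
      (x+1+a+b)*(x+S-T+1)*(x+P+S)*(x+b)*(x+a+S-T) =
        (x+S)*(x+S-T+P)*(x+1+b)*(x+1+a+S-T)*(x+a+b) := by
    intro x hx
    have hxc : c < x := lt_of_le_of_lt (le_max_left _ _) hx
    have hx2 : |a| + |b| + S + T + P + 1 < x := lt_of_le_of_lt (le_max_right _ _) hx
    have ha1 : -|a| ≤ a := neg_abs_le a
    have hb1 : -|b| ≤ b := neg_abs_le b
    have ha2 : a ≤ |a| := le_abs_self a
    have hb2 : b ≤ |b| := le_abs_self b
    have hA : (0:ℝ) ≤ |a| := abs_nonneg a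
    have hB : (0:ℝ) ≤ |b| := abs_nonneg b
    have pS : 0 < x + S := by linarith
    have pSTP : 0 < x + S - T + P := by linarith
    have pST1 : 0 < x + S - T + 1 := by linarith
    have pPS : 0 < x + P + S := by linarith
    have pb : 0 < x + b := by linarith
    have paST : 0 < x + a + S - T := by linarith
    have pb' : 0 < x + 1 + b := by linarith
    have paST' : 0 < x + 1 + a + S - T := by linarith
    have G1 := Real.Gamma_pos_of_pos pS
    have G2 := Real.Gamma_pos_of_pos pSTP
    have G3 := Real.Gamma_pos_of_pos pST1
    have G4 := Real.Gamma_pos_of_pos pPS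
    -- hypothesis at x
    have h1 := h (x : ℂ) (by simpa using hxc)
    rw [show (x:ℂ) + ↑a + ↑b = ((x+a+b : ℝ) : ℂ) by push_cast; ring,
        show (x:ℂ) + ↑b = ((x+b:ℝ):ℂ) by push_cast; ring,
        show (x:ℂ) + ↑a + ↑S - ↑T = ((x+a+S-T:ℝ):ℂ) by push_cast; ring,
        show (x:ℂ) + ↑S - ↑T + ↑P = ((x+S-T+P:ℝ):ℂ) by push_cast; ring,
        show (x:ℂ) + ↑S - ↑T + 1 = ((x+S-T+1:ℝ):ℂ) by push_cast; ring,
        show (x:ℂ) + ↑P + ↑S = ((x+P+S:ℝ):ℂ) by push_cast; ring,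
        show (x:ℂ) + ↑S = ((x+S:ℝ):ℂ) by push_cast; ring,
        Complex.Gamma_ofReal, Complex.Gamma_ofReal, Complex.Gamma_ofReal,
        Complex.Gamma_ofReal] at h1
    have h1' : (x+a+b) / ((x+b) * (x+a+S-T)) =
        Real.Gamma (x+S) * Real.Gamma (x+S-T+P) /
          (Real.Gamma (x+S-T+1) * Real.Gamma (x+P+S)) := by exact_mod_cast h1
    -- hypothesis at x+1
    have h2 := h ((x+1 : ℝ) : ℂ) (by simpa using by linarith : c < (((x+1:ℝ):ℂ)).re)
    rw [show ((x+1:ℝ):ℂ) + ↑a + ↑b = ((x+1+a+b : ℝ) : ℂ) by push_cast; ring,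
        show ((x+1:ℝ):ℂ) + ↑b = ((x+1+b:ℝ):ℂ) by push_cast; ring,
        show ((x+1:ℝ):ℂ) + ↑a + ↑S - ↑T = ((x+1+a+S-T:ℝ):ℂ) by push_cast; ring,
        show ((x+1:ℝ):ℂ) + ↑S - ↑T + ↑P = ((x+1+S-T+P:ℝ):ℂ) by push_cast; ring,
        show ((x+1:ℝ):ℂ) + ↑S - ↑T + 1 = ((x+1+S-T+1:ℝ):ℂ) by push_cast; ring,
        show ((x+1:ℝ):ℂ) + ↑P + ↑S = ((x+1+P+S:ℝ):ℂ) by push_cast; ring,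
        show ((x+1:ℝ):ℂ) + ↑S = ((x+1+S:ℝ):ℂ) by push_cast; ring,
        Complex.Gamma_ofReal, Complex.Gamma_ofReal, Complex.Gamma_ofReal,
        Complex.Gamma_ofReal] at h2
    have h2' : (x+1+a+b) / ((x+1+b) * (x+1+a+S-T)) =
        Real.Gamma (x+1+S) * Real.Gamma (x+1+S-T+P) /
          (Real.Gamma (x+1+S-T+1) * Real.Gamma (x+1+P+S)) := by exact_mod_cast h2
    rw [show x+1+S-T+P = (x+S-T+P)+1 by ring,
        show x+1+S-T+1 = (x+S-T+1)+1 by ring,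
        show x+1+P+S = (x+P+S)+1 by ring,
        show x+1+S = (x+S)+1 by ring,
        Real.Gamma_add_one pS.ne', Real.Gamma_add_one pSTP.ne',
        Real.Gamma_add_one pST1.ne', Real.Gamma_add_one pPS.ne'] at h2'
    -- cross-multiply
    have e1 := (div_eq_div_iff (mul_ne_zero pb.ne' paST.ne')
      (mul_ne_zero G3.ne' G4.ne')).mp h1'
    have e2 := (div_eq_div_iff (mul_ne_zero pb'.ne' paST'.ne')
      (mul_ne_zero (mul_ne_zero pST1.ne' G3.ne')
        (mul_ne_zero pPS.ne' G4.ne'))).mp h2'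
    have key : ((x+1+a+b)*(x+S-T+1)*(x+P+S)*(x+b)*(x+a+S-T)) *
        (Real.Gamma (x+S-T+1) * Real.Gamma (x+P+S)) =
        ((x+S)*(x+S-T+P)*(x+1+b)*(x+1+a+S-T)*(x+a+b)) *
        (Real.Gamma (x+S-T+1) * Real.Gamma (x+P+S)) := by
      linear_combination ((x+b)*(x+a+S-T)) * e2 +
        (-((x+S)*(x+S-T+P)*(x+1+b)*(x+1+a+S-T))) * e1
    exact mul_right_cancel₀ (mul_ne_zero G3.ne' G4.ne') key
  have m1 := main (M+1) (by linarith)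
  have m2 := main (M+2) (by linarith)
  have m3 := main (M+3) (by linarith)
  have m4 := main (M+4) (by linarith)
  have hTP : T * P = 0 := by
    linear_combination (1/6 : ℝ) * m1 - (1/2 : ℝ) * m2 + (1/2 : ℝ) * m3 - (1/6 : ℝ) * m4
  rcases mul_eq_zero.mp hTP with h' | h'
  · left; exact h'
  · right; exact h'
end

section
/- Let m = (m_1, ..., m_n) be positive integers and Ω = {z ∈ ℂ^n : Σ|z_i|^{2m_i} < 1}. For every multi-index α ∈ ℕ^n, ∫_Ω |z^α|² dV(z) = π^n ∏_{i=1}^n Γ((α_i+1)/m_i) / ((∏_{i=1}^n m_i) · Γ(Σ_{i=1}^n (α_i+1)/m_i + 1)). -/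
/-!
Write `g z = ∑ i, ‖z i‖ ^ p i` and `F z = ∏ i, ‖z i‖ ^ β i`, so that the theorem is the case
`p = 2m`, `β = 2α`. The diagonal dilation `z i ↦ t ^ (1 / p i) • z i` maps `{g < 1}` onto
`{g < t}` and multiplies `F dV` by a power of `t`, so `I(t) = ∫_{g < t} F = t ^ s I(1)` with
`s = ∑ i, (β i + 2) / p i`. Slicing `e^{-g}` along the level sets of `g` then gives
`∫ F e^{-g} = Γ(s + 1) I(1)`, while by Fubini the left-hand side splits into one-dimensional
integrals `∫_ℂ ‖w‖ ^ β e^{-‖w‖ ^ p} = (2π / p) Γ((β + 2) / p)`.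
-/

open MeasureTheory Set Real Module
open scoped ENNReal

theorem lintegral_exp_neg_eq_Gamma_mul_of_measure_sublevel {X : Type*} [MeasurableSpace X]
    {ν : Measure X} [SFinite ν] {g : X → ℝ} (hg : Measurable g) (hg0 : ∀ x, 0 ≤ g x) {s : ℝ}
    (hs : -1 < s) {I : ℝ≥0∞} (hI : ∀ t, 0 < t → ν {x | g x < t} = ENNReal.ofReal (t ^ s) * I) :
    ∫⁻ x, ENNReal.ofReal (exp (-g x)) ∂ν = ENNReal.ofReal (Gamma (s + 1)) * I := by
  set Φ : X × ℝ → ℝ≥0∞ := {q | g q.1 < q.2}.indicator fun q => ENNReal.ofReal (exp (-q.2))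
  have hΦ : Measurable Φ :=
    Measurable.indicator (by fun_prop) (measurableSet_lt (by fun_prop) measurable_snd)
  have hexp : ∀ x, ENNReal.ofReal (exp (-g x)) = ∫⁻ t in Ioi 0, Φ (x, t) := by
    intro x
    rw [← integral_exp_neg_Ioi, ofReal_integral_eq_lintegral_ofReal
      (integrableOn_exp_neg_Ioi _) (ae_of_all _ fun t => (exp_pos _).le),
      ← lintegral_indicator measurableSet_Ioi, ← lintegral_indicator measurableSet_Ioi]
    congr 1 with t
    by_cases h : g x < t
    · simp [Φ, h, (hg0 x).trans_lt h]
    · simp [Φ, Set.indicator, h]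
  have hslice : ∀ t, ∫⁻ x, Φ (x, t) ∂ν = ENNReal.ofReal (exp (-t)) * ν {x | g x < t} := by
    intro t
    rw [← lintegral_indicator_const (measurableSet_lt hg measurable_const)]
    rfl
  have hGamma :
      ∫⁻ t in Ioi 0, ENNReal.ofReal (exp (-t) * t ^ s) = ENNReal.ofReal (Gamma (s + 1)) := by
    have hs1 : 0 < s + 1 := by linarith
    have hconv := GammaIntegral_convergent hs1
    rw [add_sub_cancel_right] at hconv
    rw [Gamma_eq_integral hs1, add_sub_cancel_right, ofReal_integral_eq_lintegral_ofReal hconv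
      (ae_restrict_of_forall_mem measurableSet_Ioi fun t ht =>
        mul_nonneg (exp_pos _).le (rpow_nonneg (le_of_lt ht) _))]
  calc ∫⁻ x, ENNReal.ofReal (exp (-g x)) ∂ν
      = ∫⁻ t in Ioi 0, ∫⁻ x, Φ (x, t) ∂ν := by
        simp_rw [hexp]
        exact lintegral_lintegral_swap hΦ.aemeasurable
    _ = ∫⁻ t in Ioi 0, ENNReal.ofReal (exp (-t) * t ^ s) * I := by
        refine setLIntegral_congr_fun measurableSet_Ioi fun t ht => ?_
        rw [hslice, hI t ht, ENNReal.ofReal_mul (exp_pos _).le, mul_assoc]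
    _ = ENNReal.ofReal (Gamma (s + 1)) * I := by
        rw [lintegral_mul_const _ (by fun_prop), hGamma]

section DiagonalScaling

variable {ι E : Type*} [Fintype ι] [NormedAddCommGroup E] [NormedSpace ℝ E] [MeasurableSpace E]
  [BorelSpace E] [FiniteDimensional ℝ E] (μ : Measure E) [μ.IsAddHaarMeasure]

theorem map_pi_smul_addHaar {c : ι → ℝ} (hc : ∀ i, c i ≠ 0) :
    Measure.map (fun (x : ι → E) i => c i • x i) (Measure.pi fun _ => μ) =
      ENNReal.ofReal |(∏ i, c i ^ finrank ℝ E)⁻¹| • Measure.pi fun _ => μ := by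
  let T : (ι → E) →ₗ[ℝ] ι → E :=
    LinearMap.pi fun i => (c i • LinearMap.id).comp (LinearMap.proj i)
  have hdet : LinearMap.det T = ∏ i, c i ^ finrank ℝ E := by
    simp [T, LinearMap.det_pi, LinearMap.det_smul]
  rw [← hdet]
  exact Measure.map_linearMap_addHaar_eq_smul_addHaar (Measure.pi fun _ => μ)
    (by rw [hdet]; exact Finset.prod_ne_zero_iff.mpr fun i _ => pow_ne_zero _ (hc i))

theorem lintegral_comp_pi_smul {c : ι → ℝ} (hc : ∀ i, 0 < c i) {f : (ι → E) → ℝ≥0∞}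
    (hf : Measurable f) :
    ∫⁻ x, f x ∂Measure.pi (fun _ => μ) =
      ENNReal.ofReal (∏ i, c i ^ finrank ℝ E) *
        ∫⁻ x, f (fun i => c i • x i) ∂Measure.pi (fun _ => μ) := by
  have hJ : 0 < ∏ i, c i ^ finrank ℝ E := Finset.prod_pos fun i _ => pow_pos (hc i) _
  rw [← lintegral_map (g := fun (x : ι → E) i => c i • x i) hf (by fun_prop),
    map_pi_smul_addHaar μ fun i => (hc i).ne', lintegral_smul_measure, smul_eq_mul, ← mul_assoc,
    ← ENNReal.ofReal_mul hJ.le, abs_of_pos (inv_pos.mpr hJ), mul_inv_cancel₀ hJ.ne',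
    ENNReal.ofReal_one, one_mul]

theorem setLIntegral_sublevel_eq_rpow_mul {p : ι → ℝ} (hp : ∀ i, 0 < p i) (β : ι → ℝ) {t : ℝ}
    (ht : 0 < t) :
    ∫⁻ x in {x : ι → E | ∑ i, ‖x i‖ ^ p i < t}, ENNReal.ofReal (∏ i, ‖x i‖ ^ β i)
        ∂Measure.pi (fun _ => μ) =
      ENNReal.ofReal (t ^ ∑ i, (β i + finrank ℝ E) / p i) *
        ∫⁻ x in {x : ι → E | ∑ i, ‖x i‖ ^ p i < 1}, ENNReal.ofReal (∏ i, ‖x i‖ ^ β i)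
          ∂Measure.pi (fun _ => μ) := by
  set c : ι → ℝ := fun i => t ^ (p i)⁻¹
  have hc : ∀ i, 0 < c i := fun i => rpow_pos_of_pos ht _
  have hnorm : ∀ i (w : E), ‖c i • w‖ = c i * ‖w‖ := fun i w => by
    rw [norm_smul, norm_of_nonneg (hc i).le]
  have hsum : ∀ x : ι → E, ∑ i, ‖c i • x i‖ ^ p i = t * ∑ i, ‖x i‖ ^ p i := fun x => by
    simp only [hnorm, Finset.mul_sum]
    refine Finset.sum_congr rfl fun i _ => ?_
    rw [mul_rpow (hc i).le (norm_nonneg _), ← rpow_mul ht.le, inv_mul_cancel₀ (hp i).ne',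
      rpow_one]
  have hprod : ∀ x : ι → E,
      ∏ i, ‖c i • x i‖ ^ β i = (∏ i, c i ^ β i) * ∏ i, ‖x i‖ ^ β i := fun x => by
    simp only [hnorm, ← Finset.prod_mul_distrib]
    exact Finset.prod_congr rfl fun i _ => mul_rpow (hc i).le (norm_nonneg _)
  have hjac : (∏ i, c i ^ finrank ℝ E) * ∏ i, c i ^ β i = t ^ ∑ i, (β i + finrank ℝ E) / p i := by
    rw [← Finset.prod_mul_distrib, rpow_sum_of_pos ht]
    refine Finset.prod_congr rfl fun i _ => ?_
    rw [← rpow_natCast, ← rpow_add (hc i), ← rpow_mul ht.le]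
    congr 1
    field_simp
    ring
  have hmeas : ∀ r : ℝ, MeasurableSet {x : ι → E | ∑ i, ‖x i‖ ^ p i < r} := fun r =>
    measurableSet_lt (by fun_prop) measurable_const
  have hF : Measurable fun x : ι → E => ENNReal.ofReal (∏ i, ‖x i‖ ^ β i) := by fun_prop
  rw [← lintegral_indicator (hmeas t), lintegral_comp_pi_smul μ hc (hF.indicator (hmeas t)),
    ← lintegral_indicator (hmeas 1), ← hjac, ENNReal.ofReal_mul (by positivity), mul_assoc,
    ← lintegral_const_mul _ (hF.indicator (hmeas 1))]
  congr 2 with x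
  simp only [indicator_apply, mem_ofPred_eq, hsum, hprod, mul_lt_iff_lt_one_right ht]
  split_ifs
  · exact ENNReal.ofReal_mul (Finset.prod_nonneg fun i _ => (rpow_pos_of_pos (hc i) _).le)
  · rw [mul_zero]

end DiagonalScaling

theorem Complex.integrable_rpow_mul_exp_neg_rpow {p q : ℝ} (hp : 1 ≤ p) (hq : -2 < q) :
    Integrable fun x : ℂ => ‖x‖ ^ q * Real.exp (-‖x‖ ^ p) := by
  -- the integral is a positive Gamma value, hence not the junk value `0` of a non-integrable map
  refine Integrable.of_integral_ne_zero ?_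
  rw [Complex.integral_rpow_mul_exp_neg_rpow hp hq]
  have : 0 < (q + 2) / p := div_pos (by linarith) (by linarith)
  positivity

section Sublevel

variable {ι : Type*} [Fintype ι] {p β : ι → ℝ}

theorem lintegral_pi_rpow_mul_exp_neg_rpow (hp : ∀ i, 1 ≤ p i) (hβ : ∀ i, -2 < β i) :
    ∫⁻ z : ι → ℂ, ENNReal.ofReal (∏ i, ‖z i‖ ^ β i) * ENNReal.ofReal (exp (-∑ i, ‖z i‖ ^ p i)) =
      ENNReal.ofReal (∏ i, 2 * π / p i * Gamma ((β i + 2) / p i)) := by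
  have hsplit : ∀ z : ι → ℂ,
      ENNReal.ofReal (∏ i, ‖z i‖ ^ β i) * ENNReal.ofReal (exp (-∑ i, ‖z i‖ ^ p i)) =
        ENNReal.ofReal (∏ i, ‖z i‖ ^ β i * exp (-‖z i‖ ^ p i)) := fun z => by
    rw [← ENNReal.ofReal_mul (by positivity), ← Finset.sum_neg_distrib, exp_sum,
      Finset.prod_mul_distrib]
  have hint : Integrable fun z : ι → ℂ => ∏ i, ‖z i‖ ^ β i * exp (-‖z i‖ ^ p i) :=
    Integrable.fintype_prod (f := fun i (w : ℂ) => ‖w‖ ^ β i * exp (-‖w‖ ^ p i))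
      fun i => Complex.integrable_rpow_mul_exp_neg_rpow (hp i) (hβ i)
  simp_rw [hsplit]
  rw [← ofReal_integral_eq_lintegral_ofReal hint (ae_of_all _ fun z => by positivity),
    integral_fintype_prod_volume_eq_prod (f := fun i (w : ℂ) => ‖w‖ ^ β i * exp (-‖w‖ ^ p i))]
  simp_rw [Complex.integral_rpow_mul_exp_neg_rpow (hp _) (hβ _)]

theorem setIntegral_prod_norm_rpow_sublevel (hp : ∀ i, 1 ≤ p i) (hβ : ∀ i, -2 < β i) :
    ∫ z in {z : ι → ℂ | ∑ i, ‖z i‖ ^ p i < 1}, ∏ i, ‖z i‖ ^ β i =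
      (∏ i, 2 * π / p i * Gamma ((β i + 2) / p i)) / Gamma (∑ i, (β i + 2) / p i + 1) := by
  set s := ∑ i, (β i + 2) / p i
  set P := ∏ i, 2 * π / p i * Gamma ((β i + 2) / p i)
  have hs : 0 ≤ s :=
    Finset.sum_nonneg fun i _ => (div_pos (by linarith [hβ i]) (by linarith [hp i])).le
  have hΓ : 0 < Gamma (s + 1) := Gamma_pos_of_pos (by linarith)
  have hP : 0 ≤ P := Finset.prod_nonneg fun i _ =>
    mul_nonneg (div_nonneg (by positivity) (by linarith [hp i]))
      (Gamma_pos_of_pos (div_pos (by linarith [hβ i]) (by linarith [hp i]))).le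
  set g : (ι → ℂ) → ℝ := fun z => ∑ i, ‖z i‖ ^ p i
  set F : (ι → ℂ) → ℝ≥0∞ := fun z => ENNReal.ofReal (∏ i, ‖z i‖ ^ β i)
  have hmeas : ∀ r : ℝ, MeasurableSet {z | g z < r} := fun r =>
    measurableSet_lt (by fun_prop) measurable_const
  set ν := volume.withDensity F
  have hscale : ∀ t, 0 < t → ν {z | g z < t} = ENNReal.ofReal (t ^ s) * ν {z | g z < 1} := by
    intro t ht
    have := setLIntegral_sublevel_eq_rpow_mul (volume : Measure ℂ) (p := p)
      (fun i => by linarith [hp i]) β ht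
    rw [Complex.finrank_real_complex, Nat.cast_ofNat] at this
    rwa [withDensity_apply _ (hmeas t), withDensity_apply _ (hmeas 1)]
  have hI : ν {z | g z < 1} = ENNReal.ofReal P / ENNReal.ofReal (Gamma (s + 1)) := by
    rw [ENNReal.eq_div_iff (by simpa using hΓ) ENNReal.ofReal_ne_top,
      ← lintegral_exp_neg_eq_Gamma_mul_of_measure_sublevel (by fun_prop) (fun z => by positivity)
        (by linarith) hscale,
      lintegral_withDensity_eq_lintegral_mul _ (by fun_prop) (by fun_prop)]
    exact lintegral_pi_rpow_mul_exp_neg_rpow hp hβ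
  rw [integral_eq_lintegral_of_nonneg_ae (ae_of_all _ fun z => by positivity)
      (by fun_prop : Measurable fun z : ι → ℂ => ∏ i, ‖z i‖ ^ β i).aestronglyMeasurable,
    ← withDensity_apply _ (hmeas 1), hI, ENNReal.toReal_div, ENNReal.toReal_ofReal hP,
    ENNReal.toReal_ofReal hΓ.le]

end Sublevel

theorem stmt_9 (n : ℕ) (m : Fin n → ℕ) (hm : ∀ i, 0 < m i) (α : Fin n → ℕ) :
    ∫ z : Fin n → ℂ in {z : Fin n → ℂ | ∑ i, ‖z i‖ ^ (2 * m i) < 1},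
      ‖∏ i, z i ^ α i‖ ^ 2 =
    Real.pi ^ n * (∏ i, Real.Gamma (((α i : ℝ) + 1) / (m i : ℝ))) /
      ((∏ i, (m i : ℝ)) * Real.Gamma ((∑ i, ((α i : ℝ) + 1) / (m i : ℝ)) + 1)) := by
  have hp : ∀ i, 1 ≤ ((2 * m i : ℕ) : ℝ) := fun i => by
    exact_mod_cast Nat.one_le_iff_ne_zero.mpr (by have := hm i; omega)
  have hβ : ∀ i, -2 < ((2 * α i : ℕ) : ℝ) := fun i => by linarith [(2 * α i).cast_nonneg (α := ℝ)]
  have hm0 : ∀ i, (m i : ℝ) ≠ 0 := fun i => by exact_mod_cast (hm i).ne'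
  have hexp : ∀ i, (((2 * α i : ℕ) : ℝ) + 2) / ((2 * m i : ℕ) : ℝ) = ((α i : ℝ) + 1) / m i :=
    fun i => by push_cast; field_simp
  have hconst : ∀ i, 2 * π / ((2 * m i : ℕ) : ℝ) = π / m i := fun i => by push_cast; field_simp
  convert setIntegral_prod_norm_rpow_sublevel hp hβ using 1
  · simp only [rpow_natCast, norm_prod, norm_pow, ← Finset.prod_pow, ← pow_mul, mul_comm _ 2]
  · simp only [hexp, hconst, Finset.prod_mul_distrib, Finset.prod_div_distrib, Finset.prod_const,
      Finset.card_univ, Fintype.card_fin]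
    field_simp
end

section
/- Let S, T, k be nonnegative reals and P > 0. If (η+S-T+1)(η+k/2+S/2-T/2) / ((η+S)(η+k/2+S/2-T/2+1)) = (η+P+S-T+1)(η+k/2+S/2-T/2+P) / ((η+P+S)(η+k/2+S/2-T/2+P+1)) for all η in a right half-plane, then T = 0 and k = S. -/
open Complex

private lemma key_real (S T k P x : ℝ) (hP : 0 < P)
    (h0 : (x + S - T + 1) * (x + k / 2 + S / 2 - T / 2) *
        ((x + P + S) * (x + k / 2 + S / 2 - T / 2 + P + 1)) =
      (x + P + S - T + 1) * (x + k / 2 + S / 2 - T / 2 + P) *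
        ((x + S) * (x + k / 2 + S / 2 - T / 2 + 1)))
    (h1 : (x + 1 + S - T + 1) * (x + 1 + k / 2 + S / 2 - T / 2) *
        ((x + 1 + P + S) * (x + 1 + k / 2 + S / 2 - T / 2 + P + 1)) =
      (x + 1 + P + S - T + 1) * (x + 1 + k / 2 + S / 2 - T / 2 + P) *
        ((x + 1 + S) * (x + 1 + k / 2 + S / 2 - T / 2 + 1)))
    (h2 : (x + 2 + S - T + 1) * (x + 2 + k / 2 + S / 2 - T / 2) *
        ((x + 2 + P + S) * (x + 2 + k / 2 + S / 2 - T / 2 + P + 1)) =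
      (x + 2 + P + S - T + 1) * (x + 2 + k / 2 + S / 2 - T / 2 + P) *
        ((x + 2 + S) * (x + 2 + k / 2 + S / 2 - T / 2 + 1))) :
    T = 0 ∧ k = S := by
  have hPT : P * T = 0 := by linear_combination (2 * h1 - h0 - h2) / 2
  have hT0 : T = 0 := by
    rcases mul_eq_zero.mp hPT with h | h
    · exact absurd h (ne_of_gt hP)
    · exact h
  subst hT0
  refine ⟨rfl, ?_⟩
  have hks : P * (k - S) = 0 := by linear_combination h1 - h0
  rcases mul_eq_zero.mp hks with h | h
  · exact absurd h (ne_of_gt hP)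
  · linarith

theorem stmt_16 (S T k P : ℝ) (hS : 0 ≤ S) (hT : 0 ≤ T) (hk : 0 ≤ k) (hP : 0 < P)
    (h : ∃ c : ℝ, ∀ η : ℂ, c < η.re →
      (η + S - T + 1) * (η + k / 2 + S / 2 - T / 2) /
          ((η + S) * (η + k / 2 + S / 2 - T / 2 + 1)) =
        (η + P + S - T + 1) * (η + k / 2 + S / 2 - T / 2 + P) /
          ((η + P + S) * (η + k / 2 + S / 2 - T / 2 + P + 1))) :
    T = 0 ∧ k = S := by
  obtain ⟨c0, h⟩ := h
  set x : ℝ := max c0 0 + T + 1 with hxdef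
  have hxpos : 0 < x := by
    have := le_max_right c0 0
    nlinarith
  have hxc0 : c0 < x := by
    have := le_max_left c0 0
    nlinarith
  have hxT : T / 2 - k / 2 - S / 2 - 1 < x := by
    have := le_max_right c0 0
    nlinarith
  -- cross-multiplied equations at x, x+1, x+2
  have key : ∀ y : ℝ, 0 < y → T / 2 - k / 2 - S / 2 - 1 < y → c0 < y →
      (y + S - T + 1) * (y + k / 2 + S / 2 - T / 2) *
          ((y + P + S) * (y + k / 2 + S / 2 - T / 2 + P + 1)) =
        (y + P + S - T + 1) * (y + k / 2 + S / 2 - T / 2 + P) *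
          ((y + S) * (y + k / 2 + S / 2 - T / 2 + 1)) := by
    intro y hy0 hyT hyc0
    have hre : c0 < ((y : ℂ)).re := by simpa using hyc0
    have H := h (y : ℂ) hre
    have d1 : ((y : ℂ) + S) * ((y : ℂ) + k / 2 + S / 2 - T / 2 + 1) ≠ 0 := by
      apply mul_ne_zero
      · have : ((y : ℂ) + S) = ((y + S : ℝ) : ℂ) := by push_cast; ring
        rw [this]
        exact_mod_cast ne_of_gt (by linarith : (0:ℝ) < y + S)
      · have : ((y : ℂ) + k / 2 + S / 2 - T / 2 + 1) =
            ((y + k / 2 + S / 2 - T / 2 + 1 : ℝ) : ℂ) := by push_cast; ring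
        rw [this]
        exact_mod_cast ne_of_gt (by linarith : (0:ℝ) < y + k / 2 + S / 2 - T / 2 + 1)
    have d2 : ((y : ℂ) + P + S) * ((y : ℂ) + k / 2 + S / 2 - T / 2 + P + 1) ≠ 0 := by
      apply mul_ne_zero
      · have : ((y : ℂ) + P + S) = ((y + P + S : ℝ) : ℂ) := by push_cast; ring
        rw [this]
        exact_mod_cast ne_of_gt (by linarith : (0:ℝ) < y + P + S)
      · have : ((y : ℂ) + k / 2 + S / 2 - T / 2 + P + 1) =
            ((y + k / 2 + S / 2 - T / 2 + P + 1 : ℝ) : ℂ) := by push_cast; ring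
        rw [this]
        exact_mod_cast ne_of_gt
          (by linarith : (0:ℝ) < y + k / 2 + S / 2 - T / 2 + P + 1)
    rw [div_eq_div_iff d1 d2] at H
    exact_mod_cast H
  exact key_real S T k P x hP
    (key x hxpos hxT hxc0)
    (key (x + 1) (by linarith) (by linarith) (by linarith))
    (key (x + 2) (by linarith) (by linarith) (by linarith))
end

section
/- Let T ≥ 3 be an integer and P > 0, P ≠ 1, S ≥ 0 reals, and suppose for all η in a right half-plane: 1/(η - P + S - 2T + 2) = ∏_{j=2}^{T-1}(η + S - T + j) / ∏_{j=0}^{T-2}(η + P + S - T + j). Then a contradiction follows; i.e., no such P, S, T exist. -/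
open Complex Finset

theorem stmt_17 (T : ℕ) (hT : 3 ≤ T) (P S : ℝ) (hP : 0 < P) (hP1 : P ≠ 1) (hS : 0 ≤ S)
    (h : ∃ c : ℝ, ∀ η : ℂ, c < η.re →
      1 / (η - P + S - 2 * T + 2) =
        (∏ j ∈ Finset.Icc 2 (T - 1), (η + S - T + j)) /
          (∏ j ∈ Finset.range (T - 1), (η + P + S - T + j))) :
    False := by
  obtain ⟨c, hc⟩ := h
  set a : ℂ := (P : ℂ) - S + 2 * T - 2 with ha
  set p : Polynomial ℂ :=
    (∏ j ∈ Finset.range (T - 1), (Polynomial.X + Polynomial.C ((P : ℂ) + S - T + j))) -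
      (∏ j ∈ Finset.Icc 2 (T - 1), (Polynomial.X + Polynomial.C ((S : ℂ) - T + j))) *
        (Polynomial.X - Polynomial.C a) with hp
  have hpeval : ∀ η : ℂ, p.eval η =
      (∏ j ∈ Finset.range (T - 1), (η + P + S - T + j)) -
        (∏ j ∈ Finset.Icc 2 (T - 1), (η + S - T + j)) * (η - a) := by
    intro η
    simp [hp, Polynomial.eval_prod]
    ring_nf
  -- the set of roots is infinite
  have hroots : ∀ η : ℂ, max c (max (T : ℝ) (P - S + 2 * T - 2)) < η.re → p.IsRoot η := by
    intro η hη
    have h1 : c < η.re := lt_of_le_of_lt (le_max_left _ _) hη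
    have h2 : (T : ℝ) < η.re := lt_of_le_of_lt (le_max_of_le_right (le_max_left _ _)) hη
    have h3 : P - S + 2 * T - 2 < η.re :=
      lt_of_le_of_lt (le_max_of_le_right (le_max_right _ _)) hη
    have hD : (∏ j ∈ Finset.range (T - 1), (η + P + S - T + j)) ≠ 0 := by
      apply Finset.prod_ne_zero_iff.mpr
      intro j hj
      intro h0
      have := congrArg Complex.re h0
      simp at this
      have : η.re = (T : ℝ) - P - S - j := by linarith
      rw [this] at h2
      have : (0:ℝ) ≤ (j:ℝ) := Nat.cast_nonneg j
      linarith
    have hna : η - a ≠ 0 := by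
      intro h0
      have := congrArg Complex.re h0
      simp [ha] at this
      linarith
    have heq := hc η h1
    have heq' : η - ↑P + ↑S - 2 * ↑T + 2 = η - a := by
      simp [ha]; ring
    rw [heq', div_eq_div_iff hna hD, one_mul] at heq
    simp [Polynomial.IsRoot, hpeval η, heq]
  have hinf : {x : ℂ | p.IsRoot x}.Infinite := by
    apply Set.infinite_of_injective_forall_mem
      (f := fun n : ℕ => (max c (max (T : ℝ) (P - S + 2 * T - 2)) + 1 + n : ℂ))
    · intro m n hmn
      simp at hmn
      exact_mod_cast hmn
    · intro n
      apply hroots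
      have : ((max c (max (T : ℝ) (P - S + 2 * T - 2)) + 1 + n : ℂ)).re =
          max c (max (T : ℝ) (P - S + 2 * T - 2)) + 1 + n := by simp
      rw [this]
      linarith [Nat.cast_nonneg (α := ℝ) n]
  have hp0 : p = 0 := Polynomial.eq_zero_of_infinite_isRoot p hinf
  have hDa := hpeval a
  rw [hp0] at hDa
  simp at hDa
  have hprod : (∏ j ∈ Finset.range (T - 1), (a + P + S - T + j)) = 0 := hDa.symm
  rw [Finset.prod_eq_zero_iff] at hprod
  obtain ⟨j, hj, h0⟩ := hprod
  have hre := congrArg Complex.re h0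
  simp [ha] at hre
  have hj0 : (0:ℝ) ≤ (j:ℝ) := Nat.cast_nonneg j
  have hT3 : (3:ℝ) ≤ (T:ℝ) := by exact_mod_cast hT
  linarith
end

section
/- Let a_i ∈ ℝ for i = 1, ..., n and let f_i be holomorphic and zero-free on {Re ζ > a_i}. If f(ζ_1 + ... + ζ_n) = ∏ f_i(ζ_i) for a holomorphic f, then for any i ≠ j and any ζ_i, ζ_j in the respective half-planes, f_i'(ζ_i)/f_i(ζ_i) = f_j'(ζ_j)/f_j(ζ_j); in particular each logarithmic derivative f_i'/f_i is a constant function independent of i. -/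
open Complex Filter Finset Topology

/-! If `f (ζ₁ + ⋯ + ζₙ) = ∏ Fᵢ (ζᵢ)`, then moving the single variable `ζᵢ` with the others
frozen shows that, near `ζᵢ`, `f` is a translate of `Fᵢ` times the nonzero constant
`∏_{k ≠ i} F_k (ζ_k)`. Hence `logDeriv Fᵢ (ζᵢ) = logDeriv f (∑ ζ_k)` for every `i`; as the right
side does not depend on `i`, any two points `ζᵢ`, `ζⱼ` with `i ≠ j` can be put into one tuple,
and the case `i = j` passes through a point of some other half-plane. -/

section LogDeriv

variable {𝕜 𝕜' : Type*} [NontriviallyNormedField 𝕜] [NontriviallyNormedField 𝕜']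
  [NormedAlgebra 𝕜 𝕜']

theorem logDeriv_comp_add_const (f : 𝕜 → 𝕜') (a x : 𝕜) :
    logDeriv (fun z => f (z + a)) x = logDeriv f (x + a) := by
  simp only [logDeriv_apply, deriv_comp_add_const]

theorem logDeriv_eq_of_comp_add_eventuallyEq_mul_const {f g : 𝕜 → 𝕜'} {x a : 𝕜} {c : 𝕜'}
    (hc : c ≠ 0) (h : (fun z => f (z + a)) =ᶠ[𝓝 x] fun z => g z * c) :
    logDeriv g x = logDeriv f (x + a) := by
  rw [← logDeriv_comp_add_const, (logDeriv_congr_nhds h).eq_of_nhds, logDeriv_mul_const x c hc]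

end LogDeriv

section ProductIdentity

variable {ι : Type*} [Fintype ι] [DecidableEq ι] {a : ι → ℝ} {f : ℂ → ℂ} {F : ι → ℂ → ℂ}

theorem comp_add_sum_erase_eventuallyEq_mul_prod_erase
    (heq : ∀ ζ : ι → ℂ, (∀ i, a i < (ζ i).re) → f (∑ i, ζ i) = ∏ i, F i (ζ i))
    {ζ : ι → ℂ} (hζ : ∀ k, a k < (ζ k).re) (i : ι) :
    (fun z => f (z + ∑ k ∈ univ.erase i, ζ k)) =ᶠ[𝓝 (ζ i)]
      fun z => F i z * ∏ k ∈ univ.erase i, F k (ζ k) := by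
  have hopen : IsOpen {z : ℂ | a i < z.re} := isOpen_lt continuous_const continuous_re
  filter_upwards [hopen.mem_nhds (hζ i)] with z hz
  have hupdate : ∀ k, a k < (Function.update ζ i z k).re := by
    intro k
    rcases eq_or_ne k i with rfl | hk
    · simpa using hz
    · simpa [Function.update_of_ne hk] using hζ k
  have h := heq _ hupdate
  simp only [Function.apply_update (fun k => F k)] at h
  rwa [sum_update_of_mem (mem_univ i), prod_update_of_mem (mem_univ i), ← erase_eq] at h

theorem logDeriv_eq_logDeriv_sum
    (hFz : ∀ i, ∀ ζ : ℂ, a i < ζ.re → F i ζ ≠ 0)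
    (heq : ∀ ζ : ι → ℂ, (∀ i, a i < (ζ i).re) → f (∑ i, ζ i) = ∏ i, F i (ζ i))
    {ζ : ι → ℂ} (hζ : ∀ k, a k < (ζ k).re) (i : ι) :
    logDeriv (F i) (ζ i) = logDeriv f (∑ k, ζ k) := by
  rw [← add_sum_erase _ _ (mem_univ i)]
  exact logDeriv_eq_of_comp_add_eventuallyEq_mul_const
    (prod_ne_zero_iff.2 fun k _ => hFz k _ (hζ k))
    (comp_add_sum_erase_eventuallyEq_mul_prod_erase heq hζ i)

theorem logDeriv_eq_of_ne
    (hFz : ∀ i, ∀ ζ : ℂ, a i < ζ.re → F i ζ ≠ 0)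
    (heq : ∀ ζ : ι → ℂ, (∀ i, a i < (ζ i).re) → f (∑ i, ζ i) = ∏ i, F i (ζ i))
    {i j : ι} (hij : i ≠ j) {ζi ζj : ℂ} (hi : a i < ζi.re) (hj : a j < ζj.re) :
    logDeriv (F i) ζi = logDeriv (F j) ζj := by
  set ζ := Function.update (Function.update (fun k => (a k : ℂ) + 1) i ζi) j ζj
  have hζi : ζ i = ζi := by simp [ζ, hij]
  have hζj : ζ j = ζj := by simp [ζ]
  have hζ : ∀ k, a k < (ζ k).re := by
    intro k
    simp only [ζ, Function.update_apply]
    split_ifs with hkj hki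
    · exact hkj ▸ hj
    · exact hki ▸ hi
    · simp
  rw [← hζi, ← hζj, logDeriv_eq_logDeriv_sum hFz heq hζ i,
    logDeriv_eq_logDeriv_sum hFz heq hζ j]

theorem logDeriv_eq [Nontrivial ι]
    (hFz : ∀ i, ∀ ζ : ℂ, a i < ζ.re → F i ζ ≠ 0)
    (heq : ∀ ζ : ι → ℂ, (∀ i, a i < (ζ i).re) → f (∑ i, ζ i) = ∏ i, F i (ζ i))
    {i j : ι} {ζi ζj : ℂ} (hi : a i < ζi.re) (hj : a j < ζj.re) :
    logDeriv (F i) ζi = logDeriv (F j) ζj := by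
  rcases ne_or_eq i j with hij | rfl
  · exact logDeriv_eq_of_ne hFz heq hij hi hj
  obtain ⟨k, hki⟩ := exists_ne i
  have hk : a k < ((a k : ℂ) + 1).re := by simp
  rw [logDeriv_eq_of_ne hFz heq hki.symm hi hk, logDeriv_eq_of_ne hFz heq hki hk hj]

end ProductIdentity

theorem stmt_19_general (n : ℕ) (hn : 2 ≤ n) (a : Fin n → ℝ) (f : ℂ → ℂ) (F : Fin n → ℂ → ℂ)
    (hFz : ∀ i, ∀ ζ : ℂ, a i < ζ.re → F i ζ ≠ 0)
    (heq : ∀ ζ : Fin n → ℂ, (∀ i, a i < (ζ i).re) →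
      f (∑ i, ζ i) = ∏ i, F i (ζ i)) :
    (∀ i j : Fin n, ∀ ζi ζj : ℂ, a i < ζi.re → a j < ζj.re →
        deriv (F i) ζi / F i ζi = deriv (F j) ζj / F j ζj) ∧
    ∃ lam : ℂ, ∀ i, ∀ ζ : ℂ, a i < ζ.re → deriv (F i) ζ / F i ζ = lam := by
  have : Nontrivial (Fin n) := Fin.nontrivial_iff_two_le.2 hn
  have hall : ∀ i j : Fin n, ∀ ζi ζj : ℂ, a i < ζi.re → a j < ζj.re →
      logDeriv (F i) ζi = logDeriv (F j) ζj :=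
    fun _ _ _ _ hi hj => logDeriv_eq hFz heq hi hj
  let i₀ : Fin n := ⟨0, by omega⟩
  have hi₀ : a i₀ < ((a i₀ : ℂ) + 1).re := by simp
  exact ⟨hall, _, fun i ζ hζ => hall i i₀ ζ _ hζ hi₀⟩

theorem stmt_19 (n : ℕ) (hn : 2 ≤ n) (a : Fin n → ℝ) (f : ℂ → ℂ) (F : Fin n → ℂ → ℂ)
    (hF : ∀ i, DifferentiableOn ℂ (F i) {ζ : ℂ | a i < ζ.re})
    (hFz : ∀ i, ∀ ζ : ℂ, a i < ζ.re → F i ζ ≠ 0)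
    (hf : DifferentiableOn ℂ f {w : ℂ | (∑ i, a i) < w.re})
    (heq : ∀ ζ : Fin n → ℂ, (∀ i, a i < (ζ i).re) →
      f (∑ i, ζ i) = ∏ i, F i (ζ i)) :
    (∀ i j : Fin n, ∀ ζi ζj : ℂ, a i < ζi.re → a j < ζj.re →
        deriv (F i) ζi / F i ζi = deriv (F j) ζj / F j ζj) ∧
    ∃ lam : ℂ, ∀ i, ∀ ζ : ℂ, a i < ζ.re → deriv (F i) ζ / F i ζ = lam :=
  stmt_19_general n hn a f F hFz heq
end
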